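/- arXiv:2503.20143 — 3 statements merged into one kernel-verified Lean document; each statement's English description precedes it below -/
import Mathlib

section
/- Let V and W be finite-dimensional vector spaces of the same dimension n, with bases ψ_1,…,ψ_n of V and φ_1,…,φ_n of W. Let F = Σ_{i,j} F_{ij} ψ_i ⊗ φ_j be an element of V ⊗ W viewed as a degree-2 element of the exterior algebra ∧(V ⊕ W), and suppose the matrix (F_{ij}) is invertible. Then the map τ : ∧V → ∧W, which sends α to the ∧W-coefficient of ψ_1∧⋯∧ψ_n in e^F ∧ α (i.e., the composition of multiplication by exp(F) in ∧(V ⊕ W) with the projection onto the (top ∧V)-coefficient in ∧W), is a linear isomorphism. -/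
noncomputable section

/-- Inclusion `∧V → ∧(V ⊕ W)`. -/
def emapV (k V W : Type*) [CommRing k] [AddCommGroup V] [Module k V]
    [AddCommGroup W] [Module k W] :
    ExteriorAlgebra k V →ₐ[k] ExteriorAlgebra k (V × W) :=
  ExteriorAlgebra.map (LinearMap.inl k V W)

/-- Inclusion `∧W → ∧(V ⊕ W)`. -/
def emapW (k V W : Type*) [CommRing k] [AddCommGroup V] [Module k V]
    [AddCommGroup W] [Module k W] :
    ExteriorAlgebra k W →ₐ[k] ExteriorAlgebra k (V × W) :=
  ExteriorAlgebra.map (LinearMap.inr k V W)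

/-- The monomial `ψ_{i_1} ∧ ⋯ ∧ ψ_{i_k}` (indices of `S` in increasing order) in `∧(V ⊕ W)`,
built from a basis `ψ` of `V`. -/
def emonV (k : Type*) {V : Type*} (W : Type*) [CommRing k] [AddCommGroup V] [Module k V]
    [AddCommGroup W] [Module k W] {n : ℕ} (bV : Module.Basis (Fin n) k V) (S : Finset (Fin n)) :
    ExteriorAlgebra k (V × W) :=
  ((S.sort (· ≤ ·)).map fun i => ExteriorAlgebra.ι k ((bV i, (0 : W)) : V × W)).prod
open ExteriorAlgebra

namespace Stmt1Aux

variable {k : Type*} [Field k] {X : Type*} [AddCommGroup X] [Module k X] {n : ℕ}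

/-- product of `ι`'s along a list of indices -/
def mL (f : Fin n → X) (l : List (Fin n)) : ExteriorAlgebra k X :=
  (l.map fun i => ι k (f i)).prod

@[simp] lemma mL_nil (f : Fin n → X) : mL (k := k) f ([] : List (Fin n)) = 1 := rfl

lemma mL_cons (f : Fin n → X) (a : Fin n) (l : List (Fin n)) :
    mL (k := k) f (a :: l) = ι k (f a) * mL f l := by simp [mL]

lemma mL_append (f : Fin n → X) (l₁ l₂ : List (Fin n)) :
    mL (k := k) f (l₁ ++ l₂) = mL f l₁ * mL f l₂ := by simp [mL]

lemma ι_anticomm (x y : X) : ι k x * ι k y = -(ι k y * ι k x) :=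
  eq_neg_of_add_eq_zero_left (ι_add_mul_swap x y)

lemma mL_perm (f : Fin n → X) {l₁ l₂ : List (Fin n)} (h : l₁.Perm l₂) :
    ∃ m : ℕ, mL (k := k) f l₁ = (-1 : k) ^ m • mL f l₂ := by
  induction h with
  | nil => exact ⟨0, by simp⟩
  | cons a h ih =>
      obtain ⟨m, hm⟩ := ih
      exact ⟨m, by rw [mL_cons, mL_cons, hm, mul_smul_comm]⟩
  | swap a b l =>
      refine ⟨1, ?_⟩
      rw [mL_cons, mL_cons, mL_cons, mL_cons, ← mul_assoc, ← mul_assoc,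
        ι_anticomm (f b) (f a)]
      simp
  | trans h₁ h₂ ih₁ ih₂ =>
      obtain ⟨m₁, h₁'⟩ := ih₁
      obtain ⟨m₂, h₂'⟩ := ih₂
      exact ⟨m₁ + m₂, by rw [h₁', h₂', smul_smul, ← pow_add]⟩

lemma ι_mul_mL_mem (f : Fin n → X) {a : Fin n} {l : List (Fin n)} (h : a ∈ l) :
    ι k (f a) * mL f l = 0 := by
  induction l with
  | nil => simp at h
  | cons b l ih =>
      rw [mL_cons, ← mul_assoc]
      rcases List.mem_cons.1 h with rfl | h
      · rw [ι_sq_zero, zero_mul]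
      · rw [ι_anticomm (f a) (f b), neg_mul, mul_assoc, ih h, mul_zero, neg_zero]

lemma mL_eq_zero_of_not_nodup (f : Fin n → X) {l : List (Fin n)} (h : ¬ l.Nodup) :
    mL (k := k) f l = 0 := by
  induction l with
  | nil => simp at h
  | cons a l ih =>
      rw [mL_cons]
      rw [List.nodup_cons] at h
      push_neg at h
      by_cases ha : a ∈ l
      · exact ι_mul_mL_mem f ha
      · rw [ih (h ha), mul_zero]

/-- the monomial indexed by a finset -/
def mon (f : Fin n → X) (S : Finset (Fin n)) : ExteriorAlgebra k X :=
  mL f (S.sort (· ≤ ·))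

@[simp] lemma mon_empty (f : Fin n → X) : mon (k := k) f ∅ = 1 := by simp [mon]

lemma mon_mul_mon_of_not_disjoint (f : Fin n → X) {S T : Finset (Fin n)}
    (h : ¬ Disjoint S T) : mon (k := k) f S * mon f T = 0 := by
  rw [mon, mon, ← mL_append]
  refine mL_eq_zero_of_not_nodup f ?_
  rw [List.nodup_append]
  intro ⟨_, _, hd⟩
  refine h (Finset.disjoint_left.2 fun a haS haT => ?_)
  exact hd a ((Finset.mem_sort _).2 haS) a ((Finset.mem_sort _).2 haT) rfl

lemma mon_mul_mon_of_disjoint (f : Fin n → X) {S T : Finset (Fin n)}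
    (h : Disjoint S T) :
    ∃ m : ℕ, mon (k := k) f S * mon f T = (-1 : k) ^ m • mon f (S ∪ T) := by
  rw [mon, mon, ← mL_append, mon]
  refine mL_perm f ?_
  refine List.perm_of_nodup_nodup_toFinset_eq ?_ (Finset.sort_nodup _ _) ?_
  · rw [List.nodup_append]
    exact ⟨Finset.sort_nodup _ _, Finset.sort_nodup _ _,
      fun a haS b haT hab => (Finset.disjoint_left.1 h ((Finset.mem_sort _).1 haS))
        (hab ▸ (Finset.mem_sort (· ≤ ·)).1 haT)⟩
  · ext x
    simp [Finset.mem_sort]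


/-! ### Contraction and linear independence -/

open CliffordAlgebra in
lemma contract_mL_not_mem (b : Module.Basis (Fin n) k X) {i : Fin n} {l : List (Fin n)}
    (h : i ∉ l) : contractLeft (b.coord i) (mL (⇑b) l) = (0 : ExteriorAlgebra k X) := by
  induction l with
  | nil => simpa using contractLeft_one (Q := (0 : QuadraticForm k X)) (b.coord i)
  | cons a l ih =>
      rw [mL_cons, contractLeft_ι_mul, ih (fun hh => h (List.mem_cons_of_mem _ hh))]
      have : b.coord i (b a) = 0 := by
        have hia : a ≠ i := fun hh => h (hh ▸ List.mem_cons_self)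
        simp [Module.Basis.coord_apply, Finsupp.single_apply, hia]
      rw [this, zero_smul, mul_zero, sub_zero]

open CliffordAlgebra in
lemma contract_mL_head (b : Module.Basis (Fin n) k X) {a : Fin n} {l : List (Fin n)}
    (h : a ∉ l) : contractLeft (b.coord a) (mL (⇑b) (a :: l)) = mL (⇑b) l := by
  rw [mL_cons, contractLeft_ι_mul, contract_mL_not_mem b h]
  simp [Module.Basis.coord_apply]

/-- iterated contraction along a list -/
def cl (b : Module.Basis (Fin n) k X) : List (Fin n) → (ExteriorAlgebra k X →ₗ[k] ExteriorAlgebra k X)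
  | [] => LinearMap.id
  | a :: l => (cl b l).comp (CliffordAlgebra.contractLeft (b.coord a))

lemma cl_self (b : Module.Basis (Fin n) k X) {L : List (Fin n)} (h : L.Nodup) :
    cl b L (mL (⇑b) L) = 1 := by
  induction L with
  | nil => simp [cl, mL]
  | cons a L ih =>
      rw [List.nodup_cons] at h
      rw [cl, LinearMap.comp_apply, contract_mL_head b h.1, ih h.2]

lemma cl_zero_of_missing (b : Module.Basis (Fin n) k X) :
    ∀ (L l' : List (Fin n)), L.Nodup → l'.Nodup → (∃ a ∈ L, a ∉ l') →
      cl b L (mL (⇑b) l') = 0 := by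
  intro L
  induction L with
  | nil => rintro l' _ _ ⟨a, ha, _⟩; simp at ha
  | cons a₀ L ih =>
      rintro l' hL hl' ⟨a, haL, hal'⟩
      rw [List.nodup_cons] at hL
      rw [cl, LinearMap.comp_apply]
      by_cases h₀ : a₀ ∈ l'
      · obtain ⟨m, hm⟩ := mL_perm (k := k) (⇑b) (List.perm_cons_erase h₀)
        have he : a₀ ∉ l'.erase a₀ := fun hh => (List.Nodup.not_mem_erase hl') hh
        rw [hm, map_smul, contract_mL_head b he, map_smul]
        have haa : a ≠ a₀ := fun hh => hal' (hh ▸ h₀)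
        have : a ∈ L := by rcases List.mem_cons.1 haL with h | h; exact absurd h haa; exact h
        rw [ih (l'.erase a₀) hL.2 (hl'.erase a₀)
          ⟨a, this, fun hh => hal' (List.mem_of_mem_erase hh)⟩, smul_zero]
      · rw [contract_mL_not_mem b h₀, map_zero]

lemma cl_subset (b : Module.Basis (Fin n) k X) :
    ∀ (L l' : List (Fin n)), L.Nodup → l'.Nodup → (∀ x ∈ L, x ∈ l') →
      ∃ m : ℕ, cl b L (mL (⇑b) l') = (-1 : k) ^ m • mL (⇑b) (l'.diff L) := by
  intro L
  induction L with
  | nil => intro l' _ _ _; exact ⟨0, by simp [cl]⟩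
  | cons a L ih =>
      intro l' hL hl' hsub
      rw [List.nodup_cons] at hL
      have h₀ : a ∈ l' := hsub a List.mem_cons_self
      obtain ⟨m₁, hm₁⟩ := mL_perm (k := k) (⇑b) (List.perm_cons_erase h₀)
      obtain ⟨m₂, hm₂⟩ := ih (l'.erase a) hL.2 (hl'.erase a)
        (fun x hx => List.mem_erase_of_ne (by rintro rfl; exact hL.1 hx) |>.2
          (hsub x (List.mem_cons_of_mem _ hx)))
      refine ⟨m₁ + m₂, ?_⟩
      rw [cl, LinearMap.comp_apply, hm₁, map_smul, contract_mL_head b (hl'.not_mem_erase),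
        map_smul, hm₂, List.diff_cons, smul_smul, ← pow_add]

lemma algebraMapInv_ι (x : X) : algebraMapInv (ι k x) = (0 : k) := by
  simp [ExteriorAlgebra.algebraMapInv, ExteriorAlgebra.lift_ι_apply]

lemma algebraMapInv_mL (f : Fin n → X) {l : List (Fin n)} (h : l ≠ []) :
    algebraMapInv (mL (k := k) f l) = 0 := by
  cases l with
  | nil => exact absurd rfl h
  | cons a l => rw [mL_cons, map_mul, algebraMapInv_ι, zero_mul]


lemma mem_diff_of_mem' {a : Fin n} : ∀ {l₁ l₂ : List (Fin n)}, a ∈ l₁ → a ∉ l₂ → a ∈ l₁.diff l₂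
  | l₁, [], h₁, _ => h₁
  | l₁, b :: l₂, h₁, h₂ => by
      rw [List.diff_cons]
      exact mem_diff_of_mem'
        (List.mem_erase_of_ne (by rintro rfl; exact h₂ List.mem_cons_self) |>.2 h₁)
        (fun hh => h₂ (List.mem_cons_of_mem _ hh))

lemma mon_linearIndependent (b : Module.Basis (Fin n) k X) :
    LinearIndependent k (fun S : Finset (Fin n) => mon (k := k) (⇑b) S) := by
  rw [Fintype.linearIndependent_iff]
  intro g hg S
  set Λ : ExteriorAlgebra k X →ₗ[k] k :=
    (algebraMapInv.toLinearMap).comp (cl b (S.sort (· ≤ ·))) with hΛ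
  have hS : Λ (mon (⇑b) S) = 1 := by
    rw [hΛ, LinearMap.comp_apply, mon, cl_self b (Finset.sort_nodup _ _)]
    simp
  have hT : ∀ T : Finset (Fin n), T ≠ S → Λ (mon (⇑b) T) = 0 := by
    intro T hTS
    rw [hΛ, LinearMap.comp_apply, mon]
    by_cases hsub : ∀ x ∈ S.sort (· ≤ ·), x ∈ T.sort (· ≤ ·)
    · obtain ⟨m, hm⟩ := cl_subset b (S.sort (· ≤ ·)) (T.sort (· ≤ ·))
        (Finset.sort_nodup _ _) (Finset.sort_nodup _ _) hsub
      rw [hm, map_smul]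
      have hST : S ⊆ T := fun x hx => (Finset.mem_sort _).1
        (hsub x ((Finset.mem_sort _).2 hx))
      obtain ⟨a, haT, haS⟩ := Finset.exists_of_ssubset (hST.ssubset_of_ne (Ne.symm hTS))
      have : a ∈ (T.sort (· ≤ ·)).diff (S.sort (· ≤ ·)) :=
        mem_diff_of_mem' ((Finset.mem_sort _).2 haT)
          (fun hh => haS ((Finset.mem_sort _).1 hh))
      rw [AlgHom.toLinearMap_apply, algebraMapInv_mL (⇑b) (List.ne_nil_of_mem this), smul_zero]
    · push_neg at hsub
      obtain ⟨a, ha, ha'⟩ := hsub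
      rw [cl_zero_of_missing b _ _ (Finset.sort_nodup _ _) (Finset.sort_nodup _ _)
        ⟨a, ha, ha'⟩, map_zero]
  have := congrArg Λ hg
  rw [map_sum, map_zero] at this
  simp only [map_smul, smul_eq_mul] at this
  rwa [Finset.sum_eq_single_of_mem S (Finset.mem_univ S)
    (fun T _ hne => by rw [hT T hne, mul_zero]), hS, mul_one] at this

lemma mon_mem_span_mul (f : Fin n → X) (S T : Finset (Fin n)) :
    mon (k := k) f S * mon f T ∈ Submodule.span k (Set.range (mon (k := k) f)) := by
  by_cases h : Disjoint S T
  · obtain ⟨m, hm⟩ := mon_mul_mon_of_disjoint (k := k) f h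
    rw [hm]
    exact Submodule.smul_mem _ ((-1 : k) ^ m)
      (Submodule.subset_span (Set.mem_range_self (S ∪ T)))
  · rw [mon_mul_mon_of_not_disjoint f h]
    exact Submodule.zero_mem _

lemma mon_span (b : Module.Basis (Fin n) k X) :
    Submodule.span k (Set.range (mon (k := k) (⇑b))) = ⊤ := by
  refine eq_top_iff.2 fun x _ => ?_
  refine ExteriorAlgebra.induction ?_ ?_ ?_ ?_ x
  · intro r
    have : algebraMap k (ExteriorAlgebra k X) r = r • mon (k := k) (⇑b) ∅ := by
      simp [Algebra.algebraMap_eq_smul_one]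
    rw [this]
    exact Submodule.smul_mem _ _ (Submodule.subset_span ⟨∅, rfl⟩)
  · intro y
    have : ι k y = ∑ i : Fin n, b.repr y i • mon (k := k) (⇑b) {i} := by
      have hy : (∑ i : Fin n, b.repr y i • b i) = y := b.sum_repr y
      calc ι k y = ι k (∑ i : Fin n, b.repr y i • b i) := by rw [hy]
        _ = ∑ i : Fin n, b.repr y i • ι k (b i) := by rw [map_sum]; simp
        _ = _ := by
            refine Finset.sum_congr rfl fun i _ => ?_
            congr 1
            simp [mon, mL]
    rw [this]
    exact Submodule.sum_mem _ fun i _ =>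
      Submodule.smul_mem _ _ (Submodule.subset_span ⟨{i}, rfl⟩)
  · intro u v hu hv
    have h2 : Submodule.span k (Set.range (mon (k := k) (⇑b))) *
        Submodule.span k (Set.range (mon (k := k) (⇑b))) ≤
        Submodule.span k (Set.range (mon (k := k) (⇑b))) := by
      rw [Submodule.span_mul_span]
      refine Submodule.span_le.2 ?_
      rintro z ⟨z₁, ⟨S, rfl⟩, z₂, ⟨T, rfl⟩, rfl⟩
      exact mon_mem_span_mul (⇑b) S T
    exact h2 (Submodule.mul_mem_mul hu hv)
  · intro u v hu hv
    exact Submodule.add_mem _ hu hv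

/-- The basis of monomials of an exterior algebra. -/
def monBasis (b : Module.Basis (Fin n) k X) : Module.Basis (Finset (Fin n)) k (ExteriorAlgebra k X) :=
  Module.Basis.mk (mon_linearIndependent b) (mon_span b).ge

@[simp] lemma monBasis_apply (b : Module.Basis (Fin n) k X) (S : Finset (Fin n)) :
    monBasis b S = mon (⇑b) S := Module.Basis.mk_apply _ _ _


/-! ### Computations in the product exterior algebra -/

section Compute

variable {V W : Type*} [AddCommGroup V] [Module k V] [AddCommGroup W] [Module k W]
variable (bV : Module.Basis (Fin n) k V) (bW : Module.Basis (Fin n) k W) (M : Matrix (Fin n) (Fin n) k)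

/-- the images of the `V`-basis vectors -/
def pb : Fin n → V × W := fun i => (bV i, 0)

/-- the row-transformed `W` vectors -/
def beta : Fin n → W := fun i => ∑ j, M i j • bW j

/-- the images of the transformed `W` vectors -/
def pc : Fin n → V × W := fun i => (0, beta bW M i)

/-- the degree two elements `x i = ψ i * χ i` -/
def xe (i : Fin n) : ExteriorAlgebra k (V × W) :=
  ι k (pb bV i) * ι k (pc bW M i)

lemma deg2_central (a b : V × W) (y : ExteriorAlgebra k (V × W)) :
    (ι k a * ι k b) * y = y * (ι k a * ι k b) := by
  induction y using ExteriorAlgebra.induction with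
  | algebraMap r => exact (Algebra.commutes r _).symm
  | ι v =>
      rw [mul_assoc, ι_anticomm b v, mul_neg, ← mul_assoc, ι_anticomm a v, neg_mul, neg_neg,
        mul_assoc]
  | mul u v hu hv => rw [← mul_assoc, hu, mul_assoc, hv, ← mul_assoc]
  | add u v hu hv => rw [mul_add, hu, hv, add_mul]

lemma xe_commute (i : Fin n) (y : ExteriorAlgebra k (V × W)) :
    Commute (xe bV bW M i) y := deg2_central _ _ y

lemma xe_sq (i : Fin n) : xe bV bW M i * xe bV bW M i = 0 := by
  have h : (ι k (pb bV i) * ι k (pc (V := V) bW M i)) * ι k (pb bV i) =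
      -((ι k (pb bV i) * ι k (pb bV i)) * ι k (pc (V := V) bW M i)) := by
    rw [mul_assoc, ι_anticomm (pc (V := V) bW M i) (pb bV i), mul_neg, mul_assoc, ← mul_assoc]
  rw [xe, ← mul_assoc, h, ι_sq_zero, zero_mul, neg_zero, zero_mul]

/-- product of the `x i` along a list -/
def xP (l : List (Fin n)) : ExteriorAlgebra k (V × W) := (l.map (xe bV bW M)).prod

@[simp] lemma xP_nil : xP (k := k) bV bW M [] = 1 := rfl

lemma xP_cons (a : Fin n) (l : List (Fin n)) :
    xP (k := k) bV bW M (a :: l) = xe bV bW M a * xP bV bW M l := by simp [xP]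

lemma xP_pairwise (l : List (Fin n)) : (l.map (xe (k := k) bV bW M)).Pairwise Commute := by
  induction l with
  | nil => exact List.Pairwise.nil
  | cons a l ih =>
      refine List.Pairwise.cons (fun y _ => ?_) ih
      exact xe_commute bV bW M a y

lemma xP_perm {l₁ l₂ : List (Fin n)} (h : l₁.Perm l₂) :
    xP (k := k) bV bW M l₁ = xP bV bW M l₂ :=
  (h.map _).prod_eq' (xP_pairwise bV bW M l₁)

lemma xe_mul_xP_mem {a : Fin n} {l : List (Fin n)} (h : a ∈ l) :
    xe (k := k) bV bW M a * xP bV bW M l = 0 := by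
  rw [xP_perm bV bW M (List.perm_cons_erase h), xP_cons, ← mul_assoc, xe_sq, zero_mul]

/-- the monomial `x_{t₁} ⋯ x_{t_r}` for a finset -/
def eT (T : Finset (Fin n)) : ExteriorAlgebra k (V × W) := xP bV bW M (T.sort (· ≤ ·))

lemma xe_mul_eT_not_mem {i : Fin n} {T : Finset (Fin n)} (h : i ∉ T) :
    xe (k := k) bV bW M i * eT bV bW M T = eT bV bW M (insert i T) := by
  rw [eT, eT, ← xP_cons]
  refine xP_perm bV bW M ?_
  refine List.perm_of_nodup_nodup_toFinset_eq ?_ (Finset.sort_nodup _ _) ?_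
  · exact List.Nodup.cons (fun hh => h ((Finset.mem_sort _).1 hh)) (Finset.sort_nodup _ _)
  · ext a
    simp [Finset.mem_sort, List.mem_toFinset, Finset.mem_insert, or_comm]

lemma F_pow (r : ℕ) :
    (∑ i, xe (k := k) bV bW M i) ^ r =
      r.factorial • ∑ T ∈ Finset.powersetCard r (Finset.univ : Finset (Fin n)), eT bV bW M T := by
  induction r with
  | zero => simp [eT]
  | succ r ih =>
      have key : ∀ i : Fin n, ∀ T ∈ Finset.powersetCard r (Finset.univ : Finset (Fin n)),
          xe (k := k) bV bW M i * eT bV bW M T =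
            if i ∈ T then 0 else eT bV bW M (insert i T) := by
        intro i T _
        split_ifs with h
        · exact xe_mul_xP_mem bV bW M ((Finset.mem_sort _).2 h)
        · exact xe_mul_eT_not_mem bV bW M h
      calc (∑ i, xe (k := k) bV bW M i) ^ (r + 1)
          = (∑ i, xe (k := k) bV bW M i) *
            (r.factorial • ∑ T ∈ Finset.powersetCard r Finset.univ, eT bV bW M T) := by
            rw [pow_succ', ih]
        _ = r.factorial • ∑ i, ∑ T ∈ Finset.powersetCard r Finset.univ,
              (if i ∈ T then 0 else eT bV bW M (insert i T)) := by
            rw [Finset.sum_mul]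
            have hpt : ∀ i : Fin n, xe (k := k) bV bW M i *
                (r.factorial • ∑ T ∈ Finset.powersetCard r Finset.univ, eT bV bW M T) =
                r.factorial • ∑ T ∈ Finset.powersetCard r Finset.univ,
                  (if i ∈ T then 0 else eT bV bW M (insert i T)) := by
              intro i
              rw [mul_smul_comm, Finset.mul_sum]
              exact congrArg _ (Finset.sum_congr rfl (key i))
            rw [Finset.sum_congr rfl fun i _ => hpt i, ← Finset.smul_sum]
        _ = r.factorial • ∑ i : Fin n, ∑ T' ∈ Finset.powersetCard (r + 1) Finset.univ,
              (if i ∈ T' then eT bV bW M T' else 0) := by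
            refine congrArg _ (Finset.sum_congr rfl fun i _ => ?_)
            have step1 : ∑ T ∈ Finset.powersetCard r (Finset.univ : Finset (Fin n)),
                (if i ∈ T then 0 else eT (k := k) bV bW M (insert i T)) =
                ∑ T ∈ (Finset.powersetCard r Finset.univ).filter (fun T => i ∉ T),
                  eT bV bW M (insert i T) := by
              rw [Finset.sum_filter]
              simp only [ite_not]
            rw [step1, ← Finset.sum_filter]
            refine Finset.sum_nbij' (fun T => insert i T) (fun T' => T'.erase i)
              ?_ ?_ ?_ ?_ ?_
            · intro T hT
              rw [Finset.mem_filter] at hT ⊢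
              obtain ⟨hT, hiT⟩ := hT
              rw [Finset.mem_powersetCard] at hT ⊢
              exact ⟨⟨Finset.subset_univ _, by
                rw [Finset.card_insert_of_notMem hiT, hT.2]⟩, Finset.mem_insert_self i T⟩
            · intro T' hT'
              rw [Finset.mem_filter] at hT' ⊢
              obtain ⟨hT', hiT'⟩ := hT'
              rw [Finset.mem_powersetCard] at hT' ⊢
              refine ⟨⟨Finset.subset_univ _, ?_⟩, Finset.notMem_erase i T'⟩
              rw [Finset.card_erase_of_mem hiT', hT'.2]
              omega
            · intro T hT
              rw [Finset.mem_filter] at hT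
              exact Finset.erase_insert hT.2
            · intro T' hT'
              rw [Finset.mem_filter] at hT'
              exact Finset.insert_erase hT'.2
            · intro T hT
              rfl
        _ = r.factorial • ∑ T' ∈ Finset.powersetCard (r + 1) Finset.univ,
              ∑ i : Fin n, (if i ∈ T' then eT bV bW M T' else 0) := by
            rw [Finset.sum_comm]
        _ = r.factorial • ∑ T' ∈ Finset.powersetCard (r + 1) Finset.univ,
              (r + 1) • eT bV bW M T' := by
            refine congrArg _ (Finset.sum_congr rfl fun T' hT' => ?_)
            rw [Finset.sum_ite_mem, Finset.univ_inter, Finset.sum_const,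
              (Finset.mem_powersetCard.1 hT').2]
        _ = (r + 1).factorial • ∑ T' ∈ Finset.powersetCard (r + 1) Finset.univ,
              eT bV bW M T' := by
            rw [← Finset.smul_sum, smul_smul, Nat.factorial_succ, mul_comm]

@[simp] lemma pb_apply (i : Fin n) : pb (W := W) bV i = ((bV i, (0 : W)) : V × W) := rfl
@[simp] lemma pc_apply (i : Fin n) : pc (V := V) bW M i = (0, beta bW M i) := rfl

lemma E_sum [CharZero k] :
    (∑ r ∈ Finset.range (n + 1), ((r.factorial : k)⁻¹ : k) •
        (∑ i, xe (k := k) bV bW M i) ^ r)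
      = ∑ T : Finset (Fin n), eT bV bW M T := by
  have h1 : ∀ r : ℕ, ((r.factorial : k)⁻¹ : k) • ((∑ i, xe (k := k) bV bW M i) ^ r)
      = ∑ T ∈ Finset.powersetCard r Finset.univ, eT bV bW M T := by
    intro r
    rw [F_pow, ← Nat.cast_smul_eq_nsmul k, smul_smul,
      inv_mul_cancel₀ (Nat.cast_ne_zero.2 r.factorial_ne_zero), one_smul]
  rw [Finset.sum_congr rfl fun r _ => h1 r]
  have h2 := Finset.sum_powerset (Finset.univ : Finset (Fin n)) (eT (k := k) bV bW M)
  rw [Finset.powerset_univ, Finset.card_univ, Fintype.card_fin] at h2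
  exact h2.symm

lemma ι_mul_mL_swap (c : V × W) (f : Fin n → V × W) (l : List (Fin n)) :
    ι k c * mL f l = (-1 : k) ^ l.length • (mL f l * ι k c) := by
  induction l with
  | nil => simp
  | cons a l ih =>
      rw [mL_cons, List.length_cons, ← mul_assoc, ι_anticomm c (f a), neg_mul, mul_assoc, ih,
        mul_smul_comm, ← neg_smul, ← mul_assoc, ← mL_cons]
      congr 1
      rw [pow_succ, mul_neg_one]

lemma xP_mul_mL (l l₂ : List (Fin n)) :
    ∃ m : ℕ, xP (k := k) bV bW M l * mL (pb bV) l₂ =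
      (-1 : k) ^ m • (mL (pb bV) (l ++ l₂) * mL (pc (V := V) bW M) l) := by
  induction l with
  | nil => exact ⟨0, by simp⟩
  | cons a l ih =>
      obtain ⟨m, hm⟩ := ih
      refine ⟨m + (l ++ l₂).length, ?_⟩
      have core : ∀ (A B : ExteriorAlgebra k (V × W)) (L : List (Fin n)), A = mL (pb bV) L →
          xe (k := k) bV bW M a * (A * B) =
            (-1 : k) ^ L.length • ((ι k (pb bV a) * A) * (ι k (pc (V := V) bW M a) * B)) := by
        intro A B L hA
        subst hA
        rw [xe, mul_assoc (ι k (pb bV a)), ← mul_assoc (ι k (pc (V := V) bW M a)),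
          ι_mul_mL_swap, smul_mul_assoc, mul_smul_comm]
        congr 1
        rw [mul_assoc, ← mul_assoc]
      rw [xP_cons, mul_assoc, hm, mul_smul_comm, core _ _ (l ++ l₂) rfl, smul_smul, ← pow_add]
      rw [← mL_cons, ← mL_cons]
      rfl

lemma xe_mul_mon_mem {i : Fin n} {S : Finset (Fin n)} (h : i ∈ S) :
    xe (k := k) bV bW M i * mon (pb bV) S = 0 := by
  rw [xe, mon, mul_assoc, ι_mul_mL_swap (pc (V := V) bW M i) (pb bV), mul_smul_comm,
    ← mul_assoc, ι_mul_mL_mem (pb bV) ((Finset.mem_sort _).2 h), zero_mul, smul_zero]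

lemma eT_mul_mon_not_disjoint {T S : Finset (Fin n)} (h : ¬ Disjoint T S) :
    eT (k := k) bV bW M T * mon (pb bV) S = 0 := by
  obtain ⟨i, hiT, hiS⟩ := Finset.not_disjoint_iff.1 h
  have hperm : (T.sort (· ≤ ·)).Perm (i :: ((T.erase i).sort (· ≤ ·))) := by
    refine List.perm_of_nodup_nodup_toFinset_eq (Finset.sort_nodup _ _)
      (List.Nodup.cons (fun hh => (Finset.notMem_erase i T) ((Finset.mem_sort _).1 hh))
        (Finset.sort_nodup _ _)) ?_
    ext a
    simp only [List.toFinset_sort, List.mem_toFinset, List.mem_cons, Finset.mem_sort,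
      Finset.mem_erase]
    constructor
    · intro ha
      by_cases hai : a = i
      · exact Or.inl hai
      · exact Or.inr ⟨hai, ha⟩
    · rintro (rfl | ⟨_, ha⟩)
      · exact hiT
      · exact ha
  rw [eT, xP_perm bV bW M hperm, xP_cons,
    (xe_commute bV bW M i (xP bV bW M ((T.erase i).sort (· ≤ ·)))).eq, mul_assoc,
    xe_mul_mon_mem bV bW M hiS, mul_zero]

lemma eT_mul_mon_disjoint {T S : Finset (Fin n)} (h : Disjoint T S) :
    ∃ m : ℕ, eT (k := k) bV bW M T * mon (pb bV) S =
      (-1 : k) ^ m • (mon (pb bV) (T ∪ S) * mon (pc (V := V) bW M) T) := by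
  obtain ⟨m₁, hm₁⟩ := xP_mul_mL bV bW M (T.sort (· ≤ ·)) (S.sort (· ≤ ·))
  obtain ⟨m₂, hm₂⟩ := mon_mul_mon_of_disjoint (k := k) (pb (W := W) bV) h
  refine ⟨m₁ + m₂, ?_⟩
  rw [eT, mon, hm₁, mL_append]
  rw [show mL (pb bV) (T.sort (· ≤ ·)) * mL (pb bV) (S.sort (· ≤ ·)) =
    mon (pb bV) T * mon (pb bV) S from rfl, hm₂, smul_mul_assoc, smul_smul, ← pow_add]
  rfl

lemma emapV_mon (S : Finset (Fin n)) :
    emapV k V W (mon (⇑bV) S) = mon (pb (W := W) bV) S := by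
  rw [mon, mon, mL, mL, map_list_prod, List.map_map]
  congr 1
  refine List.map_congr_left fun i _ => ?_
  show emapV k V W (ι k (bV i)) = ι k (pb (W := W) bV i)
  rw [emapV, ExteriorAlgebra.map_apply_ι]
  rfl

lemma emapW_mon (T : Finset (Fin n)) :
    emapW k V W (mon (beta bW M) T) = mon (pc (V := V) bW M) T := by
  rw [mon, mon, mL, mL, map_list_prod, List.map_map]
  congr 1
  refine List.map_congr_left fun i _ => ?_
  show emapW k V W (ι k (beta bW M i)) = ι k (pc (V := V) bW M i)
  rw [emapW, ExteriorAlgebra.map_apply_ι]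
  rfl

lemma emonV_eq (S : Finset (Fin n)) : emonV k W bV S = mon (pb (W := W) bV) S := rfl

lemma F_link :
    (∑ i : Fin n, ∑ j : Fin n, M i j •
        (ι k ((bV i, (0 : W)) : V × W) * ι k (((0 : V), bW j) : V × W)))
      = ∑ i, xe (k := k) bV bW M i := by
  refine Finset.sum_congr rfl fun i _ => Eq.symm ?_
  have hpc : (pc (V := V) bW M i) = ∑ j, M i j • ((((0 : V), bW j)) : V × W) := by
    rw [pc_apply, beta]
    refine Prod.ext ?_ ?_
    · rw [Prod.fst_sum]
      simp
    · rw [Prod.snd_sum]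
      simp
  rw [xe, hpc, map_sum, Finset.mul_sum]
  refine Finset.sum_congr rfl fun j _ => ?_
  rw [map_smul, mul_smul_comm, pb_apply]

lemma tau_mon (P : ExteriorAlgebra k (V × W) →ₗ[k] ExteriorAlgebra k W)
    (hP : ∀ (S : Finset (Fin n)) (y : ExteriorAlgebra k W),
      P (emonV k W bV S * emapW k V W y) = if S = Finset.univ then y else 0)
    (S : Finset (Fin n)) :
    ∃ m : ℕ, P ((∑ T : Finset (Fin n), eT (k := k) bV bW M T) * mon (pb (W := W) bV) S) =
      (-1 : k) ^ m • mon (beta bW M) Sᶜ := by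
  classical
  rw [Finset.sum_mul, map_sum]
  have hzero : ∀ T : Finset (Fin n), T ≠ Sᶜ →
      P (eT bV bW M T * mon (pb (W := W) bV) S) = 0 := by
    intro T hT
    by_cases hd : Disjoint T S
    · obtain ⟨m, hm⟩ := eT_mul_mon_disjoint bV bW M hd
      rw [hm, map_smul]
      have hU : T ∪ S ≠ Finset.univ := by
        intro hU
        apply hT
        ext x
        simp only [Finset.mem_compl]
        constructor
        · intro hx hxS
          exact (Finset.disjoint_left.1 hd hx) hxS
        · intro hx
          have : x ∈ T ∪ S := hU ▸ Finset.mem_univ x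
          rcases Finset.mem_union.1 this with h | h
          · exact h
          · exact absurd h hx
      rw [show mon (pb (W := W) bV) (T ∪ S) * mon (pc (V := V) bW M) T =
          emonV k W bV (T ∪ S) * emapW k V W (mon (beta bW M) T) from by
            rw [emapW_mon, emonV_eq], hP, if_neg hU, smul_zero]
    · rw [eT_mul_mon_not_disjoint bV bW M hd, map_zero]
  rw [Finset.sum_eq_single_of_mem Sᶜ (Finset.mem_univ _) (fun T _ h => hzero T h)]
  obtain ⟨m, hm⟩ := eT_mul_mon_disjoint bV bW M (disjoint_compl_left : Disjoint Sᶜ S)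
  refine ⟨m, ?_⟩
  rw [hm, map_smul]
  rw [show mon (pb (W := W) bV) (Sᶜ ∪ S) * mon (pc (V := V) bW M) Sᶜ =
      emonV k W bV (Sᶜ ∪ S) * emapW k V W (mon (beta bW M) Sᶜ) from by
        rw [emapW_mon, emonV_eq], hP, if_pos (by ext x; by_cases h : x ∈ S <;> simp [h])]

/-- complementation as an equiv of finsets -/
def complEquiv (n : ℕ) : Finset (Fin n) ≃ Finset (Fin n) :=
  ⟨fun S => Sᶜ, fun S => Sᶜ, compl_compl, compl_compl⟩

/-- sign-twisted, complement-reindexed monomial basis -/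
def bigB {X : Type*} [AddCommGroup X] [Module k X] (b : Module.Basis (Fin n) k X)
    (m : Finset (Fin n) → ℕ) : Module.Basis (Finset (Fin n)) k (ExteriorAlgebra k X) :=
  ((monBasis b).reindex (complEquiv n)).unitsSMul fun S => (-1 : kˣ) ^ m S

lemma bigB_apply {X : Type*} [AddCommGroup X] [Module k X] (b : Module.Basis (Fin n) k X)
    (m : Finset (Fin n) → ℕ) (S : Finset (Fin n)) :
    bigB b m S = (-1 : k) ^ m S • mon (⇑b) Sᶜ := by
  rw [bigB, Module.Basis.unitsSMul_apply, Module.Basis.reindex_apply, Units.smul_def,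
    Units.val_pow_eq_pow_val, Units.val_neg, Units.val_one]
  congr 1
  rw [show (complEquiv n).symm S = Sᶜ from rfl, monBasis_apply]

end Compute

end Stmt1Aux

open Stmt1Aux in
/-- for `F = Σ F_{ij} ψ_i ⊗ φ_j` with `(F_{ij})` invertible, the transform
`τ(α) = p̂_*(e^F ∧ α)`, where `p̂_*` extracts the coefficient of the top element
`ψ_1 ∧ ⋯ ∧ ψ_n` of `∧V`, is a linear isomorphism `∧V → ∧W`. -/
theorem stmt1 {k V W : Type*} [Field k] [CharZero k] [AddCommGroup V] [Module k V]
    [AddCommGroup W] [Module k W] {n : ℕ}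
    (bV : Module.Basis (Fin n) k V) (bW : Module.Basis (Fin n) k W)
    (M : Matrix (Fin n) (Fin n) k) (hM : IsUnit M.det)
    (P : ExteriorAlgebra k (V × W) →ₗ[k] ExteriorAlgebra k W)
    (hP : ∀ (S : Finset (Fin n)) (y : ExteriorAlgebra k W),
      P (emonV k W bV S * emapW k V W y) = if S = Finset.univ then y else 0) :
    Function.Bijective (fun x : ExteriorAlgebra k V =>
      P ((∑ r ∈ Finset.range (n + 1), ((r.factorial : k)⁻¹ : k) •
            (∑ i : Fin n, ∑ j : Fin n, M i j •
              (ExteriorAlgebra.ι k ((bV i, (0 : W)) : V × W)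
                * ExteriorAlgebra.ι k (((0 : V), bW j) : V × W))) ^ r)
          * emapV k V W x)) := by
  classical
  have hMT : IsUnit (Matrix.transpose M).det := by rwa [Matrix.det_transpose]
  set β : Module.Basis (Fin n) k W := bW.map (Matrix.toLinearEquiv bW (Matrix.transpose M) hMT) with hβdef
  have hβ : ⇑β = beta bW M := by
    funext i
    rw [hβdef, Module.Basis.map_apply, Matrix.toLinearEquiv_apply, Matrix.toLin_self, beta]
    exact Finset.sum_congr rfl fun j _ => by rw [Matrix.transpose_apply]
  choose msgn hmsgn using tau_mon bV bW M P hP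
  have hE : (∑ r ∈ Finset.range (n + 1), ((r.factorial : k)⁻¹ : k) •
        (∑ i : Fin n, ∑ j : Fin n, M i j •
          (ExteriorAlgebra.ι k ((bV i, (0 : W)) : V × W)
            * ExteriorAlgebra.ι k (((0 : V), bW j) : V × W))) ^ r)
      = ∑ T : Finset (Fin n), eT (k := k) bV bW M T := by
    rw [F_link bV bW M]
    exact E_sum bV bW M
  have hfun : (fun x : ExteriorAlgebra k V =>
      P ((∑ r ∈ Finset.range (n + 1), ((r.factorial : k)⁻¹ : k) •
            (∑ i : Fin n, ∑ j : Fin n, M i j •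
              (ExteriorAlgebra.ι k ((bV i, (0 : W)) : V × W)
                * ExteriorAlgebra.ι k (((0 : V), bW j) : V × W))) ^ r)
          * emapV k V W x))
      = ⇑(P ∘ₗ LinearMap.mulLeft k (∑ T : Finset (Fin n), eT (k := k) bV bW M T) ∘ₗ
          (emapV k V W).toLinearMap) := by
    funext x
    rw [hE]
    rfl
  have hLM : (P ∘ₗ LinearMap.mulLeft k (∑ T : Finset (Fin n), eT (k := k) bV bW M T) ∘ₗ
      (emapV k V W).toLinearMap)
      = ((monBasis bV).equiv (bigB β msgn) (Equiv.refl _)).toLinearMap := by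
    refine (monBasis bV).ext fun S => ?_
    have hrhs : (((monBasis bV).equiv (bigB β msgn) (Equiv.refl _)).toLinearMap)
        ((monBasis bV) S) = (-1 : k) ^ msgn S • mon (beta bW M) Sᶜ := by
      rw [LinearEquiv.coe_toLinearMap, Module.Basis.equiv_apply, Equiv.refl_apply, bigB_apply, hβ]
    rw [hrhs, LinearMap.comp_apply, LinearMap.comp_apply, AlgHom.toLinearMap_apply,
      LinearMap.mulLeft_apply, monBasis_apply, emapV_mon, hmsgn S]
  rw [hfun, hLM]
  rw [LinearEquiv.coe_toLinearMap]
  exact LinearEquiv.bijective _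
end
end

section
/- Let Ω and Ω̂ be cochain complexes with twisted differentials d^H = d + H∧ and d^Ĥ = d + Ĥ∧ respectively, and suppose there are chain-level operations p*, p̂_* and an element F with dF = p*H − p̂*Ĥ on a 'correspondence' complex satisfying p̂_* ∘ d = d ∘ p̂_* (up to sign conventions of fiber integration) and p* a map of differential algebras. Then τ_F := p̂_* ∘ e^F ∘ p* is a map of complexes: τ_F ∘ d^H = d^Ĥ ∘ τ_F. -/
/-- The exponential `e^F = Σ_{i<m} F^i / i!` of a nilpotent element. -/
noncomputable def expSum {Ωc : Type*} [CommRing Ωc] [Algebra ℚ Ωc] (F : Ωc) (m : ℕ) : Ωc :=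
  ∑ i ∈ Finset.range m, ((i.factorial : ℚ)⁻¹ : ℚ) • F ^ i

lemma dc_one {Ωc : Type*} [CommRing Ωc] [Algebra ℚ Ωc] (dc : Ωc →ₗ[ℚ] Ωc)
    (hdcLeib : ∀ a b : Ωc, dc (a * b) = dc a * b + a * dc b) : dc 1 = 0 := by
  have := hdcLeib 1 1
  simpa using this

lemma dc_pow {Ωc : Type*} [CommRing Ωc] [Algebra ℚ Ωc] (dc : Ωc →ₗ[ℚ] Ωc)
    (hdcLeib : ∀ a b : Ωc, dc (a * b) = dc a * b + a * dc b) (F : Ωc) :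
    ∀ n : ℕ, dc (F ^ (n + 1)) = (n + 1) • (F ^ n * dc F) := by
  intro n
  induction n with
  | zero => simp [hdcLeib F 1, dc_one dc hdcLeib]
  | succ k ih =>
    have : F ^ (k + 2) = F * F ^ (k + 1) := by ring
    rw [this, hdcLeib, ih]
    simp only [succ_nsmul, smul_add]
    ring_nf

lemma dc_expSum {Ωc : Type*} [CommRing Ωc] [Algebra ℚ Ωc] (dc : Ωc →ₗ[ℚ] Ωc)
    (hdcLeib : ∀ a b : Ωc, dc (a * b) = dc a * b + a * dc b) (F : Ωc) (m : ℕ)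
    (hFnil : F ^ m = 0) : dc (expSum F m) = expSum F m * dc F := by
  cases m with
  | zero => simp [expSum]
  | succ k =>
    have hterm : F ^ k * dc F = 0 := by
      have h0 : dc (F ^ (k + 1)) = (k + 1) • (F ^ k * dc F) := dc_pow dc hdcLeib F k
      rw [hFnil, map_zero] at h0
      have h1 : ((k + 1 : ℕ) : ℚ) • (F ^ k * dc F) = 0 := by
        rw [Nat.cast_smul_eq_nsmul]; exact h0.symm
      have h2 : (((k + 1 : ℕ) : ℚ)⁻¹ * ((k + 1 : ℕ) : ℚ)) • (F ^ k * dc F) = 0 := by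
        rw [mul_smul, h1, smul_zero]
      rwa [inv_mul_cancel₀ (by exact_mod_cast Nat.succ_ne_zero k), one_smul] at h2
    unfold expSum
    rw [map_sum, Finset.sum_mul, Finset.sum_range_succ' (f := fun i => dc (((i.factorial : ℚ)⁻¹ : ℚ) • F ^ i)),
      Finset.sum_range_succ (f := fun i => (((i.factorial : ℚ)⁻¹ : ℚ) • F ^ i) * dc F)]
    simp only [map_smul, pow_zero, dc_one dc hdcLeib, smul_zero, add_zero]
    rw [smul_mul_assoc, hterm, smul_zero, add_zero]
    apply Finset.sum_congr rfl
    intro i _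
    rw [dc_pow dc hdcLeib F i, ← Nat.cast_smul_eq_nsmul ℚ, smul_smul, smul_mul_assoc]
    congr 1
    rw [Nat.factorial_succ, Nat.cast_mul]
    field_simp

/-- given a correspondence dga `Ωc` with pullback maps `p* : Ω → Ωc`,
`p̂* : Ω̂ → Ωc`, a pushforward `p̂_* : Ωc → Ω̂` commuting with the differentials and satisfying
the projection formula, and an element `F` with `dF = p*H − p̂*Ĥ`, the transform
`τ_F = p̂_* ∘ e^F ∘ p*` intertwines the twisted differentials: `τ_F ∘ d^H = d^Ĥ ∘ τ_F`. -/
theorem stmt5 {Ω Ωh Ωc : Type*} [CommRing Ω] [CommRing Ωh] [CommRing Ωc] [Algebra ℚ Ωc]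
    (d : Ω →+ Ω) (dh : Ωh →+ Ωh) (dc : Ωc →ₗ[ℚ] Ωc)
    (hdcLeib : ∀ a b : Ωc, dc (a * b) = dc a * b + a * dc b)
    (pst : Ω →+* Ωc) (qst : Ωh →+* Ωc) (ph : Ωc →+ Ωh)
    (hpd : ∀ x, pst (d x) = dc (pst x))
    (hphd : ∀ z, ph (dc z) = dh (ph z))
    (hproj : ∀ (y : Ωh) (z : Ωc), ph (qst y * z) = y * ph z)
    (H : Ω) (Hh : Ωh) (F : Ωc) (m : ℕ) (hFnil : F ^ m = 0)
    (hF : dc F = pst H - qst Hh) :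
    ∀ x : Ω,
      ph (expSum F m * pst (d x + H * x))
        = dh (ph (expSum F m * pst x)) + Hh * ph (expSum F m * pst x) := by
  intro x
  set E := expSum F m with hE
  have hdE : dc E = E * dc F := dc_expSum dc hdcLeib F m hFnil
  have key : E * pst (d x + H * x) = dc (E * pst x) + qst Hh * (E * pst x) := by
    rw [map_add, map_mul, hpd, hdcLeib, hdE, hF]
    ring
  rw [key, map_add, hphd, hproj]
end

section
/- Let Ω(M) be a graded commutative dga and consider the kernel F = −Σ_{i=1}^{n} λ_i^{-1} ψ_{2(n−i)+1} ∧ ψ̂_{2i−1} in the exterior algebra generated by odd elements ψ_{2i−1} and ψ̂_{2i−1} over Ω(M), with dψ_{2i−1} = c_i, dψ̂_{2i−1} = λ_i ε̂_{2i}, where c_i, ε̂_{2i} are closed, and set H = Σ_i ε̂_{2(n−i+1)} ψ_{2i−1} + h, Ĥ = Σ_i λ_i^{-1} c_{n−i+1} ψ̂_{2i−1} + h with h closed. Then dF = H − Ĥ (viewing all elements in the common algebra ∧⟨Ψ ∪ Ψ̂⟩ ⊗ Ω(M)), provided H is closed. -/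
/-- the gerbe trivialization condition of constructive T-duality for frame
bundles.  With `dψ_i = c_i`, `dψ̂_i = λ_i ε̂_i` (all `c_i, ε̂_i, h` closed, `λ_i ≠ 0`),
`H = Σ_i ε̂_{rev i} ψ_i + h`, `Ĥ = Σ_i λ_i⁻¹ c_{rev i} ψ̂_i + h` and the kernel
`F = −Σ_i λ_i⁻¹ ψ_{rev i} ψ̂_i`, one has `dF = H − Ĥ`, provided `H` is closed. -/
theorem stmt16 {R A : Type*} [Field R] [Ring A] [Algebra R A] {n : ℕ}
    (d : A →ₗ[R] A)
    (ψ ψh c εh : Fin n → A) (h : A) (lam : Fin n → R)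
    (hlam : ∀ i, lam i ≠ 0)
    (hdψ : ∀ i, d (ψ i) = c i)
    (hdψh : ∀ i, d (ψh i) = lam i • εh i)
    (hLψ : ∀ (i : Fin n) (b : A), d (ψ i * b) = d (ψ i) * b - ψ i * d b)
    (hcomm : ∀ i j, ψ i * εh j = εh j * ψ i)
    (hh : d h = 0) (hc : ∀ i, d (c i) = 0) (hεh : ∀ i, d (εh i) = 0)
    (hHclosed : d ((∑ i, εh (Fin.rev i) * ψ i) + h) = 0) :
    d (-∑ i, (lam i)⁻¹ • (ψ (Fin.rev i) * ψh i))
      = ((∑ i, εh (Fin.rev i) * ψ i) + h)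
        - ((∑ i, (lam i)⁻¹ • (c (Fin.rev i) * ψh i)) + h) := by
  have key : ∀ i : Fin n, d ((lam i)⁻¹ • (ψ (Fin.rev i) * ψh i))
      = (lam i)⁻¹ • (c (Fin.rev i) * ψh i) - ψ (Fin.rev i) * εh i := by
    intro i
    rw [map_smul, hLψ, hdψ, hdψh, smul_sub, mul_smul_comm, smul_smul,
      inv_mul_cancel₀ (hlam i), one_smul]
  have hrev : (∑ i, ψ (Fin.rev i) * εh i) = ∑ i, εh (Fin.rev i) * ψ i := by
    rw [← Equiv.sum_comp (Fin.revPerm : Equiv.Perm (Fin n)) fun i => εh (Fin.rev i) * ψ i]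
    simp [hcomm]
  rw [map_neg, map_sum]
  simp_rw [key]
  rw [Finset.sum_sub_distrib, neg_sub, hrev]
  abel
end
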